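/- Let r be a real random variable with P(r ≥ -1) = 1, P(r > 0) > 0, P(r < 0) > 0, E[(ln(1+r))²] < ∞, and suppose there exists f ∈ (0,1) with E[ln(1 + f r)] > 0, so that the Kelly fraction f* ∈ (0,1), the unique zero of g_r'(f) = E[r/(1 + f r)], exists. Then the asymptotic Sharpe ratio SR_r(f) = g_r(f)/√(υ_r(f)) is differentiable at f* with SR_r'(f*) < 0; in particular, SR_r is strictly decreasing on some neighborhood of f*. -/

import Mathlib

open MeasureTheory ProbabilityTheory Real Filter Topology
open Set
open scoped ENNReal

/-!
At the Kelly fraction `g'(f*) = 0`, so differentiating `SR = g / √υ` gives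
`SR'(f*) = -g(f*) υ'(f*) / (2 υ(f*)^{3/2})`. Concavity of `log` gives `g(f*) > f* g'(f*) = 0`,
and `υ' = 2 (E[L Y] - E[L] E[Y])` with `L = log (1 + f r)` and `Y = r / (1 + f r) = ∂L/∂f`; at
`f*` this is `2 E[L Y] > 0`, because `L` and `Y` both have the sign of `r`. For `f` in a compact
subinterval of `(0, 1)`, `|L|` is dominated by `|log (1 + r)| + c` and `|Y|` by a constant, so
`SR'` exists and is continuous on `(0, 1)`, hence negative near `f*`.
-/

lemma HasDerivAt.div_sqrt {g v : ℝ → ℝ} {g' v' x : ℝ} (hg : HasDerivAt g g' x)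
    (hv : HasDerivAt v v' x) (hvpos : 0 < v x) :
    HasDerivAt (fun y => g y / √(v y)) ((2 * g' * v x - g x * v') / (2 * v x * √(v x))) x := by
  have hsqrt : 0 < √(v x) := sqrt_pos.2 hvpos
  refine (hg.div (hv.sqrt hvpos.ne') hsqrt.ne').congr_deriv ?_
  rw [sq_sqrt hvpos.le]
  field_simp
  rw [sq_sqrt hvpos.le]
  ring

lemma exists_strictAntiOn_Ioo_of_hasDerivAt {F F' : ℝ → ℝ} {x : ℝ}
    (hF : ∀ᶠ y in 𝓝 x, HasDerivAt F (F' y) y) (hF' : ContinuousAt F' x) (hneg : F' x < 0) :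
    ∃ ε > 0, StrictAntiOn F (Ioo (x - ε) (x + ε)) := by
  obtain ⟨ε, hε, hball⟩ :=
    Metric.eventually_nhds_iff_ball.1 (hF.and (hF'.eventually_lt_const hneg))
  refine ⟨ε, hε, ?_⟩
  rw [← ball_eq_Ioo]
  refine strictAntiOn_of_deriv_neg (convex_ball x ε)
    (fun y hy => (hball y hy).1.continuousAt.continuousWithinAt) fun y hy => ?_
  rw [interior_eq_iff_isOpen.2 Metric.isOpen_ball] at hy
  rw [(hball y hy).1.deriv]
  exact (hball y hy).2

lemma integral_pos_of_ae_pos_on {Ω : Type*} [MeasurableSpace Ω] {P : Measure Ω} {h : Ω → ℝ}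
    {s : Set Ω} (hint : Integrable h P) (hnn : 0 ≤ᵐ[P] h) (hs : 0 < P s)
    (hpos : ∀ᵐ ω ∂P, ω ∈ s → 0 < h ω) : 0 < ∫ ω, h ω ∂P := by
  rw [integral_pos_iff_support_of_nonneg_ae hnn hint]
  refine hs.trans_le (measure_mono_ae ?_)
  filter_upwards [hpos] with ω hω hωs
  exact (hω hωs).ne'

namespace Kelly

lemma one_add_mul_pos {f x : ℝ} (hx : -1 ≤ x) (hf0 : 0 ≤ f) (hf1 : f < 1) : 0 < 1 + f * x := by
  nlinarith

lemma hasDerivAt_log_one_add_mul {f x : ℝ} (h : 1 + f * x ≠ 0) :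
    HasDerivAt (fun t => log (1 + t * x)) (x / (1 + f * x)) f := by
  simpa using (((hasDerivAt_id f).mul_const x).const_add 1).log h

lemma abs_log_one_add_mul_le {b f x : ℝ} (hx : -1 ≤ x) (hf0 : 0 ≤ f) (hfb : f ≤ b) (hb : b < 1) :
    |log (1 + f * x)| ≤ |log (1 + x)| + |log (1 - b)| := by
  have hpos : 0 < 1 + f * x := one_add_mul_pos hx hf0 (hfb.trans_lt hb)
  rcases le_or_gt 0 x with h | h
  · have hlog : 0 ≤ log (1 + f * x) := log_nonneg (by nlinarith)
    have hmono : log (1 + f * x) ≤ log (1 + x) := log_le_log hpos (by nlinarith)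
    rw [abs_of_nonneg hlog, abs_of_nonneg (hlog.trans hmono)]
    linarith [abs_nonneg (log (1 - b))]
  · have hlog : log (1 + f * x) ≤ 0 := log_nonpos hpos.le (by nlinarith)
    have hmono : log (1 - b) ≤ log (1 + f * x) := log_le_log (by linarith) (by nlinarith)
    rw [abs_of_nonpos hlog, abs_of_nonpos (hmono.trans hlog)]
    linarith [abs_nonneg (log (1 + x))]

lemma abs_div_one_add_mul_le {a b f x : ℝ} (hx : -1 ≤ x) (ha : 0 < a) (hf : f ∈ Icc a b)
    (hb : b < 1) : |x / (1 + f * x)| ≤ max a⁻¹ (1 - b)⁻¹ := by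
  obtain ⟨haf, hfb⟩ := hf
  have hpos : 0 < 1 + f * x := one_add_mul_pos hx (ha.le.trans haf) (hfb.trans_lt hb)
  rcases le_or_gt 0 x with h | h
  · refine le_max_of_le_left ?_
    rw [abs_of_nonneg (div_nonneg h hpos.le), ← one_div, div_le_div_iff₀ hpos ha]
    nlinarith
  · refine le_max_of_le_right ?_
    rw [abs_of_neg (div_neg_of_neg_of_pos h hpos), ← one_div, neg_div',
      div_le_div_iff₀ hpos (by linarith)]
    nlinarith

lemma abs_log_one_add_mul_mul_div_le {a b f x : ℝ} (hx : -1 ≤ x) (ha : 0 < a) (hf : f ∈ Icc a b)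
    (hb : b < 1) :
    |log (1 + f * x) * (x / (1 + f * x))| ≤
      (|log (1 + x)| + |log (1 - b)|) * max a⁻¹ (1 - b)⁻¹ := by
  rw [abs_mul]
  exact mul_le_mul (abs_log_one_add_mul_le hx (ha.le.trans hf.1) hf.2 hb)
    (abs_div_one_add_mul_le hx ha hf hb) (abs_nonneg _) (by positivity)

lemma mul_div_one_add_mul_le_log {f x : ℝ} (hx : -1 ≤ x) (hf0 : 0 ≤ f) (hf1 : f < 1) :
    f * (x / (1 + f * x)) ≤ log (1 + f * x) := by
  have hpos := one_add_mul_pos hx hf0 hf1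
  have := one_sub_inv_le_log_of_pos hpos
  calc f * (x / (1 + f * x)) = 1 - (1 + f * x)⁻¹ := by field_simp; ring
    _ ≤ _ := this

lemma mul_div_one_add_mul_lt_log {f x : ℝ} (hx : -1 ≤ x) (hf0 : 0 < f) (hf1 : f < 1)
    (hx0 : x ≠ 0) : f * (x / (1 + f * x)) < log (1 + f * x) := by
  have hpos := one_add_mul_pos hx hf0.le hf1
  have hne : (1 + f * x)⁻¹ ≠ 1 := by
    rw [Ne, inv_eq_one]
    intro h
    exact hx0 (by simpa [hf0.ne'] using h)
  have := log_lt_sub_one_of_pos (inv_pos.2 hpos) hne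
  rw [log_inv] at this
  calc f * (x / (1 + f * x)) = 1 - (1 + f * x)⁻¹ := by field_simp; ring
    _ < _ := by linarith

lemma log_one_add_mul_mul_div_nonneg {f x : ℝ} (hx : -1 ≤ x) (hf0 : 0 ≤ f) (hf1 : f < 1) :
    0 ≤ log (1 + f * x) * (x / (1 + f * x)) := by
  have hpos := one_add_mul_pos hx hf0 hf1
  rcases le_or_gt 0 x with h | h
  · exact mul_nonneg (log_nonneg (by nlinarith)) (div_nonneg h hpos.le)
  · exact mul_nonneg_of_nonpos_of_nonpos (log_nonpos hpos.le (by nlinarith))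
      (div_nonpos_of_nonpos_of_nonneg h.le hpos.le)

section Integrals

variable {Ω : Type*} [MeasurableSpace Ω] {P : Measure Ω} {r : Ω → ℝ}

lemma ae_abs_log_one_add_mul_le (h1 : ∀ᵐ ω ∂P, -1 ≤ r ω) {b : ℝ} (hb : b < 1) :
    ∀ᵐ ω ∂P, ∀ f ∈ Icc 0 b, |log (1 + f * r ω)| ≤ |log (1 + r ω)| + |log (1 - b)| := by
  filter_upwards [h1] with ω hω f hf
  exact abs_log_one_add_mul_le hω hf.1 hf.2 hb

lemma ae_abs_div_one_add_mul_le (h1 : ∀ᵐ ω ∂P, -1 ≤ r ω) {a b : ℝ} (ha : 0 < a) (hb : b < 1) :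
    ∀ᵐ ω ∂P, ∀ f ∈ Icc a b, |r ω / (1 + f * r ω)| ≤ max a⁻¹ (1 - b)⁻¹ := by
  filter_upwards [h1] with ω hω f hf
  exact abs_div_one_add_mul_le hω ha hf hb

lemma ae_abs_log_one_add_mul_mul_div_le (h1 : ∀ᵐ ω ∂P, -1 ≤ r ω) {a b : ℝ} (ha : 0 < a)
    (hb : b < 1) :
    ∀ᵐ ω ∂P, ∀ f ∈ Icc a b, |log (1 + f * r ω) * (r ω / (1 + f * r ω))| ≤
      (|log (1 + r ω)| + |log (1 - b)|) * max a⁻¹ (1 - b)⁻¹ := by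
  filter_upwards [h1] with ω hω f hf
  exact abs_log_one_add_mul_mul_div_le hω ha hf hb

lemma ae_hasDerivAt_log_one_add_mul (h1 : ∀ᵐ ω ∂P, -1 ≤ r ω) :
    ∀ᵐ ω ∂P, ∀ f ∈ Ioo (0 : ℝ) 1,
      HasDerivAt (fun t => log (1 + t * r ω)) (r ω / (1 + f * r ω)) f := by
  filter_upwards [h1] with ω hω f hf
  exact hasDerivAt_log_one_add_mul (one_add_mul_pos hω hf.1.le hf.2).ne'

variable [IsFiniteMeasure P]

lemma memLp_log_one_add_mul (hr : Measurable r) (h1 : ∀ᵐ ω ∂P, -1 ≤ r ω) {p : ℝ≥0∞}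
    (hL : MemLp (fun ω => log (1 + r ω)) p P) {f : ℝ} (hf0 : 0 ≤ f) (hf1 : f < 1) :
    MemLp (fun ω => log (1 + f * r ω)) p P := by
  refine (hL.abs.add (memLp_const |log (1 - f)|)).of_le
    (by fun_prop : Measurable fun ω => log (1 + f * r ω)).aestronglyMeasurable ?_
  filter_upwards [ae_abs_log_one_add_mul_le h1 hf1] with ω hω
  simp only [Pi.add_apply, norm_eq_abs]
  exact (hω f ⟨hf0, le_rfl⟩).trans (le_abs_self _)

lemma integrable_log_one_add_mul (hr : Measurable r) (h1 : ∀ᵐ ω ∂P, -1 ≤ r ω)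
    (hL : Integrable (fun ω => log (1 + r ω)) P) {f : ℝ} (hf0 : 0 ≤ f) (hf1 : f < 1) :
    Integrable (fun ω => log (1 + f * r ω)) P :=
  memLp_one_iff_integrable.1 (memLp_log_one_add_mul hr h1 (memLp_one_iff_integrable.2 hL) hf0 hf1)

lemma integrable_div_one_add_mul (hr : Measurable r) (h1 : ∀ᵐ ω ∂P, -1 ≤ r ω) {f : ℝ}
    (hf : f ∈ Ioo (0 : ℝ) 1) : Integrable (fun ω => r ω / (1 + f * r ω)) P := by
  refine (integrable_const (max f⁻¹ (1 - f)⁻¹)).mono'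
    (by fun_prop : Measurable fun ω => r ω / (1 + f * r ω)).aestronglyMeasurable ?_
  filter_upwards [ae_abs_div_one_add_mul_le h1 hf.1 hf.2] with ω hω
  exact hω f ⟨le_rfl, le_rfl⟩

lemma integrable_log_one_add_mul_mul_div (hr : Measurable r) (h1 : ∀ᵐ ω ∂P, -1 ≤ r ω)
    (hL : Integrable (fun ω => log (1 + r ω)) P) {f : ℝ} (hf : f ∈ Ioo (0 : ℝ) 1) :
    Integrable (fun ω => log (1 + f * r ω) * (r ω / (1 + f * r ω))) P := by
  refine ((hL.abs.add (integrable_const |log (1 - f)|)).mul_const (max f⁻¹ (1 - f)⁻¹)).mono'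
    (by fun_prop : Measurable fun ω =>
      log (1 + f * r ω) * (r ω / (1 + f * r ω))).aestronglyMeasurable ?_
  filter_upwards [ae_abs_log_one_add_mul_mul_div_le h1 hf.1 hf.2] with ω hω
  exact hω f ⟨le_rfl, le_rfl⟩

theorem hasDerivAt_integral_log_one_add_mul (hr : Measurable r) (h1 : ∀ᵐ ω ∂P, -1 ≤ r ω)
    (hL : Integrable (fun ω => log (1 + r ω)) P) {f₀ : ℝ} (hf₀ : f₀ ∈ Ioo (0 : ℝ) 1) :
    HasDerivAt (fun f => ∫ ω, log (1 + f * r ω) ∂P) (∫ ω, r ω / (1 + f₀ * r ω) ∂P) f₀ := by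
  obtain ⟨a, ha, haf⟩ := exists_between hf₀.1
  obtain ⟨b, hfb, hb⟩ := exists_between hf₀.2
  refine (hasDerivAt_integral_of_dominated_loc_of_deriv_le
    (F' := fun f ω => r ω / (1 + f * r ω)) (Ioo_mem_nhds haf hfb)
    (.of_forall fun f => (by fun_prop : Measurable fun ω => log (1 + f * r ω)).aestronglyMeasurable)
    (integrable_log_one_add_mul hr h1 hL hf₀.1.le hf₀.2)
    (integrable_div_one_add_mul hr h1 hf₀).aestronglyMeasurable
    ?_ (integrable_const (max a⁻¹ (1 - b)⁻¹)) ?_).2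
  · filter_upwards [ae_abs_div_one_add_mul_le h1 ha hb] with ω hω f hf
    exact hω f (Ioo_subset_Icc_self hf)
  · filter_upwards [ae_hasDerivAt_log_one_add_mul h1] with ω hω f hf
    exact hω f ⟨ha.trans hf.1, hf.2.trans hb⟩

theorem hasDerivAt_integral_log_one_add_mul_sq (hr : Measurable r) (h1 : ∀ᵐ ω ∂P, -1 ≤ r ω)
    (hL : MemLp (fun ω => log (1 + r ω)) 2 P) {f₀ : ℝ} (hf₀ : f₀ ∈ Ioo (0 : ℝ) 1) :
    HasDerivAt (fun f => ∫ ω, log (1 + f * r ω) ^ 2 ∂P)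
      (2 * ∫ ω, log (1 + f₀ * r ω) * (r ω / (1 + f₀ * r ω)) ∂P) f₀ := by
  obtain ⟨a, ha, haf⟩ := exists_between hf₀.1
  obtain ⟨b, hfb, hb⟩ := exists_between hf₀.2
  have hL1 := hL.integrable one_le_two
  rw [← integral_const_mul]
  refine (hasDerivAt_integral_of_dominated_loc_of_deriv_le
    (F' := fun f ω => 2 * (log (1 + f * r ω) * (r ω / (1 + f * r ω)))) (Ioo_mem_nhds haf hfb)
    (.of_forall fun f =>
      (by fun_prop : Measurable fun ω => log (1 + f * r ω) ^ 2).aestronglyMeasurable)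
    (memLp_log_one_add_mul hr h1 hL hf₀.1.le hf₀.2).integrable_sq
    ((integrable_log_one_add_mul_mul_div hr h1 hL1 hf₀).const_mul 2).aestronglyMeasurable
    ?_ (((hL1.abs.add (integrable_const |log (1 - b)|)).mul_const (max a⁻¹ (1 - b)⁻¹)).const_mul 2)
    ?_).2
  · filter_upwards [ae_abs_log_one_add_mul_mul_div_le h1 ha hb] with ω hω f hf
    rw [norm_eq_abs, abs_mul, abs_two]
    exact mul_le_mul_of_nonneg_left (hω f (Ioo_subset_Icc_self hf)) zero_le_two
  · filter_upwards [ae_hasDerivAt_log_one_add_mul h1] with ω hω f hf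
    refine ((hω f ⟨ha.trans hf.1, hf.2.trans hb⟩).pow 2).congr_deriv ?_
    ring

theorem continuousAt_integral_div_one_add_mul (hr : Measurable r) (h1 : ∀ᵐ ω ∂P, -1 ≤ r ω)
    {f₀ : ℝ} (hf₀ : f₀ ∈ Ioo (0 : ℝ) 1) :
    ContinuousAt (fun f => ∫ ω, r ω / (1 + f * r ω) ∂P) f₀ := by
  obtain ⟨a, ha, haf⟩ := exists_between hf₀.1
  obtain ⟨b, hfb, hb⟩ := exists_between hf₀.2
  refine continuousAt_of_dominated
    (.of_forall fun f =>
      (by fun_prop : Measurable fun ω => r ω / (1 + f * r ω)).aestronglyMeasurable)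
    ?_ (integrable_const (max a⁻¹ (1 - b)⁻¹)) ?_
  · filter_upwards [Ioo_mem_nhds haf hfb] with f hf
    filter_upwards [ae_abs_div_one_add_mul_le h1 ha hb] with ω hω
    exact hω f (Ioo_subset_Icc_self hf)
  · filter_upwards [h1] with ω hω
    exact continuousAt_const.div (by fun_prop) (one_add_mul_pos hω hf₀.1.le hf₀.2).ne'

theorem continuousAt_integral_log_one_add_mul_mul_div (hr : Measurable r)
    (h1 : ∀ᵐ ω ∂P, -1 ≤ r ω) (hL : Integrable (fun ω => log (1 + r ω)) P) {f₀ : ℝ}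
    (hf₀ : f₀ ∈ Ioo (0 : ℝ) 1) :
    ContinuousAt (fun f => ∫ ω, log (1 + f * r ω) * (r ω / (1 + f * r ω)) ∂P) f₀ := by
  obtain ⟨a, ha, haf⟩ := exists_between hf₀.1
  obtain ⟨b, hfb, hb⟩ := exists_between hf₀.2
  refine continuousAt_of_dominated
    (.of_forall fun f => (by fun_prop : Measurable fun ω =>
      log (1 + f * r ω) * (r ω / (1 + f * r ω))).aestronglyMeasurable)
    ?_ ((hL.abs.add (integrable_const |log (1 - b)|)).mul_const (max a⁻¹ (1 - b)⁻¹)) ?_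
  · filter_upwards [Ioo_mem_nhds haf hfb] with f hf
    filter_upwards [ae_abs_log_one_add_mul_mul_div_le h1 ha hb] with ω hω
    exact hω f (Ioo_subset_Icc_self hf)
  · filter_upwards [h1] with ω hω
    have hpos := (one_add_mul_pos hω hf₀.1.le hf₀.2).ne'
    have hc : ContinuousAt (fun t => 1 + t * r ω) f₀ := by fun_prop
    exact (hc.log hpos).mul (continuousAt_const.div hc hpos)

theorem integral_log_one_add_mul_pos (hr : Measurable r) (h1 : ∀ᵐ ω ∂P, -1 ≤ r ω)
    (hpos : 0 < P {ω | 0 < r ω}) (hL : Integrable (fun ω => log (1 + r ω)) P) {f : ℝ}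
    (hf : f ∈ Ioo (0 : ℝ) 1) (hzero : ∫ ω, r ω / (1 + f * r ω) ∂P = 0) :
    0 < ∫ ω, log (1 + f * r ω) ∂P := by
  have hLf := integrable_log_one_add_mul hr h1 hL hf.1.le hf.2
  have hY := (integrable_div_one_add_mul hr h1 hf).const_mul f
  have hgap : 0 < ∫ ω, (log (1 + f * r ω) - f * (r ω / (1 + f * r ω))) ∂P := by
    refine integral_pos_of_ae_pos_on (hLf.sub hY) ?_ hpos ?_
    · filter_upwards [h1] with ω hω
      exact sub_nonneg.2 (mul_div_one_add_mul_le_log hω hf.1.le hf.2)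
    · filter_upwards [h1] with ω hω (hω₀ : 0 < r ω)
      exact sub_pos.2 (mul_div_one_add_mul_lt_log hω hf.1 hf.2 hω₀.ne')
  rwa [integral_sub hLf hY, integral_const_mul, hzero, mul_zero, sub_zero] at hgap

theorem integral_log_one_add_mul_mul_div_pos (hr : Measurable r) (h1 : ∀ᵐ ω ∂P, -1 ≤ r ω)
    (hpos : 0 < P {ω | 0 < r ω}) (hL : Integrable (fun ω => log (1 + r ω)) P) {f : ℝ}
    (hf : f ∈ Ioo (0 : ℝ) 1) :
    0 < ∫ ω, log (1 + f * r ω) * (r ω / (1 + f * r ω)) ∂P := by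
  refine integral_pos_of_ae_pos_on (integrable_log_one_add_mul_mul_div hr h1 hL hf) ?_ hpos ?_
  · filter_upwards [h1] with ω hω
    exact log_one_add_mul_mul_div_nonneg hω hf.1.le hf.2
  · filter_upwards with ω (hω : 0 < r ω)
    exact mul_pos (log_pos (by nlinarith [hf.1])) (div_pos hω (by nlinarith [hf.1]))

/-- `log (1 + f r)` is positive where `r > 0` and negative where `r < 0`, so it is not a.s.
constant. -/
theorem variance_log_one_add_mul_pos (hr : Measurable r) (h1 : ∀ᵐ ω ∂P, -1 ≤ r ω)
    (hpos : 0 < P {ω | 0 < r ω}) (hneg : 0 < P {ω | r ω < 0})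
    (hL : MemLp (fun ω => log (1 + r ω)) 2 P) {f : ℝ} (hf : f ∈ Ioo (0 : ℝ) 1) :
    0 < variance (fun ω => log (1 + f * r ω)) P := by
  obtain ⟨hf0, hf1⟩ := hf
  refine (variance_nonneg _ _).lt_of_ne' fun hvar => ?_
  have hconst :=
    ae_eq_integral_of_variance_eq_zero (memLp_log_one_add_mul hr h1 hL hf0.le hf1) hvar
  obtain ⟨ω₁, hr₁ : 0 < r ω₁, -, hω₁⟩ :=
    Measure.exists_mem_of_measure_ne_zero_of_ae hpos.ne' (ae_restrict_of_ae (h1.and hconst))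
  obtain ⟨ω₂, hr₂ : r ω₂ < 0, hω₂, hω₂'⟩ :=
    Measure.exists_mem_of_measure_ne_zero_of_ae hneg.ne' (ae_restrict_of_ae (h1.and hconst))
  have hlog₁ : 0 < log (1 + f * r ω₁) := log_pos (by nlinarith)
  have hlog₂ : log (1 + f * r ω₂) < 0 :=
    log_neg (one_add_mul_pos hω₂ hf0.le hf1) (by nlinarith)
  rw [hω₁] at hlog₁
  rw [hω₂'] at hlog₂
  linarith

end Integrals

theorem hasDerivAt_variance_log_one_add_mul {Ω : Type*} [MeasurableSpace Ω] {P : Measure Ω}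
    [IsProbabilityMeasure P] {r : Ω → ℝ} (hr : Measurable r) (h1 : ∀ᵐ ω ∂P, -1 ≤ r ω)
    (hL : MemLp (fun ω => log (1 + r ω)) 2 P) {f₀ : ℝ} (hf₀ : f₀ ∈ Ioo (0 : ℝ) 1) :
    HasDerivAt (fun f => variance (fun ω => log (1 + f * r ω)) P)
      (2 * ((∫ ω, log (1 + f₀ * r ω) * (r ω / (1 + f₀ * r ω)) ∂P) -
        (∫ ω, log (1 + f₀ * r ω) ∂P) * ∫ ω, r ω / (1 + f₀ * r ω) ∂P)) f₀ := by
  have hm := hasDerivAt_integral_log_one_add_mul_sq hr h1 hL hf₀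
  have hg := hasDerivAt_integral_log_one_add_mul hr h1 (hL.integrable one_le_two) hf₀
  refine ((hm.sub (hg.pow 2)).congr_deriv (by ring)).congr_of_eventuallyEq ?_
  filter_upwards [Ioo_mem_nhds hf₀.1 hf₀.2] with f hf
  exact variance_eq_sub (memLp_log_one_add_mul hr h1 hL hf.1.le hf.2)

end Kelly

open Kelly

theorem sharpe_ratio_decreasing_at_kelly_general
    {Ω : Type*} [MeasurableSpace Ω] (P : Measure Ω) [IsProbabilityMeasure P]
    (r : Ω → ℝ) (hmeas : Measurable r)
    (h1 : ∀ᵐ ω ∂P, -1 ≤ r ω)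
    (hpos : 0 < P {ω | 0 < r ω})
    (hneg : 0 < P {ω | r ω < 0})
    (hsq : Integrable (fun ω => (Real.log (1 + r ω)) ^ 2) P)
    (fstar : ℝ) (hfstar : fstar ∈ Set.Ioo (0 : ℝ) 1)
    (hzero : ∫ ω, r ω / (1 + fstar * r ω) ∂P = 0) :
    ∃ s : ℝ, s < 0 ∧
      HasDerivAt
        (fun f => (∫ ω, Real.log (1 + f * r ω) ∂P)
          / Real.sqrt (variance (fun ω => Real.log (1 + f * r ω)) P)) s fstar
      ∧ ∃ ε > 0, StrictAntiOn
          (fun f => (∫ ω, Real.log (1 + f * r ω) ∂P)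
            / Real.sqrt (variance (fun ω => Real.log (1 + f * r ω)) P))
          (Set.Ioo (fstar - ε) (fstar + ε)) := by
  have hL : MemLp (fun ω => log (1 + r ω)) 2 P := (memLp_two_iff_integrable_sq
    (by fun_prop : Measurable fun ω => log (1 + r ω)).aestronglyMeasurable).2 hsq
  have hL1 := hL.integrable one_le_two
  set g := fun f => ∫ ω, log (1 + f * r ω) ∂P
  set G := fun f => ∫ ω, r ω / (1 + f * r ω) ∂P
  set K := fun f => ∫ ω, log (1 + f * r ω) * (r ω / (1 + f * r ω)) ∂P
  set v := fun f => variance (fun ω => log (1 + f * r ω)) P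
  set D := fun f => (2 * G f * v f - g f * (2 * (K f - g f * G f))) / (2 * v f * √(v f))
  have hD : ∀ f ∈ Ioo (0 : ℝ) 1, HasDerivAt (fun f => g f / √(v f)) (D f) f := fun f hf =>
    (hasDerivAt_integral_log_one_add_mul hmeas h1 hL1 hf).div_sqrt
      (hasDerivAt_variance_log_one_add_mul hmeas h1 hL hf)
      (variance_log_one_add_mul_pos hmeas h1 hpos hneg hL hf)
  have hvpos := variance_log_one_add_mul_pos hmeas h1 hpos hneg hL hfstar
  have hDneg : D fstar < 0 := by
    have hg := integral_log_one_add_mul_pos hmeas h1 hpos hL1 hfstar hzero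
    have hK := integral_log_one_add_mul_mul_div_pos hmeas h1 hpos hL1 hfstar
    have hsqrt := sqrt_pos.2 hvpos
    simp only [D, G, hzero, mul_zero, zero_mul, sub_zero, zero_sub]
    exact div_neg_of_neg_of_pos (neg_neg_of_pos (by positivity)) (by positivity)
  have hDcont : ContinuousAt D fstar := by
    have hg : ContinuousAt g fstar :=
      (hasDerivAt_integral_log_one_add_mul hmeas h1 hL1 hfstar).continuousAt
    have hG := continuousAt_integral_div_one_add_mul hmeas h1 hfstar
    have hK := continuousAt_integral_log_one_add_mul_mul_div hmeas h1 hL1 hfstar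
    have hv : ContinuousAt v fstar :=
      (hasDerivAt_variance_log_one_add_mul hmeas h1 hL hfstar).continuousAt
    have hden : 2 * v fstar * √(v fstar) ≠ 0 := by positivity
    fun_prop (disch := exact hden)
  exact ⟨D fstar, hDneg, hD fstar hfstar, exists_strictAntiOn_Ioo_of_hasDerivAt
    (eventually_of_mem (Ioo_mem_nhds hfstar.1 hfstar.2) hD) hDcont hDneg⟩

/-- if the game is favorable (so the Kelly fraction
`f* ∈ (0,1)`, the unique zero of `g_r'(f) = E[r/(1+fr)]`, exists), then the
asymptotic Sharpe ratio `SR_r(f) = g_r(f)/√(υ_r(f))` is differentiable at `f*`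
with `SR_r'(f*) < 0`; in particular `SR_r` is strictly decreasing on a
neighborhood of `f*`. -/
theorem sharpe_ratio_decreasing_at_kelly
    {Ω : Type*} [MeasurableSpace Ω] (P : Measure Ω) [IsProbabilityMeasure P]
    (r : Ω → ℝ) (hmeas : Measurable r)
    (h1 : ∀ᵐ ω ∂P, -1 ≤ r ω)
    (hpos : 0 < P {ω | 0 < r ω})
    (hneg : 0 < P {ω | r ω < 0})
    (hsq : Integrable (fun ω => (Real.log (1 + r ω)) ^ 2) P)
    (hedge : ∃ f ∈ Set.Ioo (0 : ℝ) 1, 0 < ∫ ω, Real.log (1 + f * r ω) ∂P)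
    (fstar : ℝ) (hfstar : fstar ∈ Set.Ioo (0 : ℝ) 1)
    (hzero : ∫ ω, r ω / (1 + fstar * r ω) ∂P = 0)
    (huniq : ∀ f ∈ Set.Ioo (0 : ℝ) 1, ∫ ω, r ω / (1 + f * r ω) ∂P = 0 → f = fstar) :
    ∃ s : ℝ, s < 0 ∧
      HasDerivAt
        (fun f => (∫ ω, Real.log (1 + f * r ω) ∂P)
          / Real.sqrt (variance (fun ω => Real.log (1 + f * r ω)) P)) s fstar
      ∧ ∃ ε > 0, StrictAntiOn
          (fun f => (∫ ω, Real.log (1 + f * r ω) ∂P)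
            / Real.sqrt (variance (fun ω => Real.log (1 + f * r ω)) P))
          (Set.Ioo (fstar - ε) (fstar + ε)) :=
  sharpe_ratio_decreasing_at_kelly_general P r hmeas h1 hpos hneg hsq fstar hfstar hzero
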